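/- arXiv:2401.12530 — 2 statements merged into one kernel-verified Lean document; each statement's English description precedes it below -/
import Mathlib

section
/- Let N ≥ 1 and let p be real with 1 + 2/N < p, and p ≤ N/(N−2) if N ≥ 3. Set q = max{2, N(p−1)/2} and μ = N(1/2 − 1/q). Let λ > max{1, N/2} satisfy λ > ((q−1)/q)·(N+2−(N−2)p)/(2(p − 1 − 2/N)), and define Θ = (1/(p+1) + 2λ/(N(p+1)) − 1/q) / (1/2 − 1/q + (λ−1)/N). Then λ·((p+1)Θ/2 − 1) − (N/4 + μ/2)(1−Θ)(p+1) < 0. -/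
set_option maxHeartbeats 800000


/-- the exponent computation showing the decay of the weighted nonlinear term:
with `q = max{2, N(p-1)/2}`, `μ = N(1/2 - 1/q)`,
`Θ = (1/(p+1) + 2λ/(N(p+1)) - 1/q)/(1/2 - 1/q + (λ-1)/N)`, one has
`λ((p+1)Θ/2 - 1) - (N/4 + μ/2)(1-Θ)(p+1) < 0`. -/
theorem stmt_11 (N : ℕ) (hN : 1 ≤ N) (p q μ lam Θ : ℝ)
    (hp1 : 1 + 2 / (N : ℝ) < p) (hp2 : 3 ≤ N → p ≤ (N : ℝ) / ((N : ℝ) - 2))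
    (hq : q = max 2 ((N : ℝ) * (p - 1) / 2))
    (hμ : μ = (N : ℝ) * (1 / 2 - 1 / q))
    (hl1 : max 1 ((N : ℝ) / 2) < lam)
    (hl2 : (q - 1) / q * (((N : ℝ) + 2 - ((N : ℝ) - 2) * p)
      / (2 * (p - 1 - 2 / (N : ℝ)))) < lam)
    (hΘ : Θ = (1 / (p + 1) + 2 * lam / ((N : ℝ) * (p + 1)) - 1 / q)
      / (1 / 2 - 1 / q + (lam - 1) / (N : ℝ))) :
    lam * ((p + 1) * Θ / 2 - 1) - ((N : ℝ) / 4 + μ / 2) * (1 - Θ) * (p + 1) < 0 := by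
  set n : ℝ := (N : ℝ) with hn_def
  have hn : (0:ℝ) < n := by
    have : (1:ℝ) ≤ n := by rw [hn_def]; exact_mod_cast hN
    linarith
  have hq2 : (2:ℝ) ≤ q := by rw [hq]; exact le_max_left _ _
  have hq0 : (0:ℝ) < q := by linarith
  have hp1' : 2 / n < p - 1 := by linarith
  have hd : 0 < p - 1 - 2 / n := by linarith
  have hnp : 2 < n * (p - 1) := by
    have := (div_lt_iff₀ hn).mp hp1'
    linarith [this]
  have hp0 : (0:ℝ) < p + 1 := by
    have : (0:ℝ) < 2 / n := div_pos two_pos hn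
    linarith
  have hlam1 : 1 < lam := lt_of_le_of_lt (le_max_left _ _) hl1
  have hqinv : 1 / q ≤ 1 / 2 := by
    apply one_div_le_one_div_of_le <;> linarith
  have hB : 0 < 1 / 2 - 1 / q + (lam - 1) / n := by
    have h1 : 0 < (lam - 1) / n := div_pos (by linarith) hn
    linarith
  set B : ℝ := 1 / 2 - 1 / q + (lam - 1) / n with hB_def
  -- key reduced inequality
  have hc : (2 - n * (p - 1)) / (2 * n) < 0 := by
    apply div_neg_of_neg_of_pos <;> linarith
  have key : lam * ((2 - n * (p - 1)) / (2 * n)) <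
      (q - 1) / q * (n * (p - 1) - 2 * (p + 1)) / 4 := by
    have h := mul_lt_mul_of_neg_right hl2 hc
    calc lam * ((2 - n * (p - 1)) / (2 * n))
        < (q - 1) / q * ((n + 2 - (n - 2) * p) / (2 * (p - 1 - 2 / n))) *
            ((2 - n * (p - 1)) / (2 * n)) := h
      _ = (q - 1) / q * (n * (p - 1) - 2 * (p + 1)) / 4 := by
          have hd2 : n * (p - 1) - 2 ≠ 0 := by linarith
          have hrw : p - 1 - 2 / n = (n * (p - 1) - 2) / n := by
            field_simp
          rw [hrw]
          field_simp
          ring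
  -- numerator identity
  set E : ℝ := lam * ((p + 1) * Θ / 2 - 1) - (n / 4 + μ / 2) * (1 - Θ) * (p + 1) with hE_def
  have hEB : E * B = lam * ((2 - n * (p - 1)) / (2 * n)) -
      (q - 1) / q * (n * (p - 1) - 2 * (p + 1)) / 4 := by
    have hΘB : Θ * B = 1 / (p + 1) + 2 * lam / (n * (p + 1)) - 1 / q := by
      rw [hΘ]; exact div_mul_cancel₀ _ (ne_of_gt hB)
    have expand : E * B = (Θ * B) * (lam * (p + 1) / 2 + (n / 4 + μ / 2) * (p + 1))
        - (lam + (n / 4 + μ / 2) * (p + 1)) * B := by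
      rw [hE_def]; ring
    have hq' : q ≠ 0 := hq0.ne'
    have hn' : n ≠ 0 := hn.ne'
    have hp' : p + 1 ≠ 0 := hp0.ne'
    rw [expand, hΘB, hμ, hB_def]
    field_simp
    ring
  have hEBneg : E * B < 0 := by rw [hEB]; linarith
  by_contra h
  push_neg at h
  nlinarith [mul_nonneg h hB.le]
end

section
/- Let N ≥ 1 and let p be real with 1 + 2/N < p < 2. Let λ > 1 satisfy λ > (2N − (N−2)p)/(2p), and set θ = N(2−p)/(2p(λ−1)). Then: (i) θ < 1; and (ii) if in addition λ > (2N − 8/N − (N−2)p)/(4(p − 1 − 2/N)), then λpθ/2 − (N/4)p(1−θ) < −1. -/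
/-- exponent computations in the case `p < 2`:
with `θ = N(2-p)/(2p(λ-1))`, (i) `θ < 1`, and (ii) if moreover
`λ > (2N - 8/N - (N-2)p)/(4(p - 1 - 2/N))` then `λpθ/2 - (N/4)p(1-θ) < -1`. -/
theorem stmt_13 (N : ℕ) (hN : 1 ≤ N) (p lam θ : ℝ)
    (hp1 : 1 + 2 / (N : ℝ) < p) (hp2 : p < 2) (hl0 : 1 < lam)
    (hl1 : (2 * (N : ℝ) - ((N : ℝ) - 2) * p) / (2 * p) < lam)
    (hθ : θ = (N : ℝ) * (2 - p) / (2 * p * (lam - 1))) :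
    θ < 1 ∧
    ((2 * (N : ℝ) - 8 / (N : ℝ) - ((N : ℝ) - 2) * p) / (4 * (p - 1 - 2 / (N : ℝ))) < lam →
      lam * p * θ / 2 - ((N : ℝ) / 4) * p * (1 - θ) < -1) := by
  have hn0 : (0 : ℝ) < N := by exact_mod_cast Nat.lt_of_lt_of_le Nat.zero_lt_one hN
  have hn2 : (0 : ℝ) < 2 / N := by positivity
  have hp0 : (0 : ℝ) < p := by nlinarith
  have hl : (0 : ℝ) < lam - 1 := by linarith
  have hD : (0 : ℝ) < 2 * p * (lam - 1) := by positivity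
  have hl1' : 2 * (N : ℝ) - ((N : ℝ) - 2) * p < lam * (2 * p) := by
    rwa [div_lt_iff₀ (by positivity)] at hl1
  have hθ' : θ * (2 * p * (lam - 1)) = (N : ℝ) * (2 - p) := by
    rw [hθ]; field_simp
  constructor
  · rw [hθ, div_lt_one hD]; nlinarith
  · intro h2
    have hden : (0 : ℝ) < p - 1 - 2 / N := by linarith
    have h2' : 2 * (N : ℝ) - 8 / N - ((N : ℝ) - 2) * p < lam * (4 * (p - 1 - 2 / N)) := by
      rwa [div_lt_iff₀ (by positivity)] at h2
    have h2n : (2 * (N : ℝ) - 8 / N - ((N : ℝ) - 2) * p) * N <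
        lam * (4 * (p - 1 - 2 / N)) * N := by
      exact mul_lt_mul_of_pos_right h2' hn0
    have h8 : 8 / (N : ℝ) * N = 8 := by field_simp
    have h2N : 2 / (N : ℝ) * N = 2 := by field_simp
    nlinarith [mul_pos hn0 hl, mul_pos hp0 hl, sq_nonneg ((N:ℝ) - 2)]
end
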